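/- Let N ≥ 2 be an integer, w ≥ 0 an integer, ω a Dirichlet character modulo N, τ ∈ ℋ, and s ∈ ℂ with w + 2 Re(s) > 2. Then Σ_{α∈(ℤ/Nℤ)^×} ω(α) E^{(w)}_{α̃/N}(τ,s) = (−2πi)^{−w} π^{−s} Γ(s+w) Im(τ)^s N^{w+2s} E_{w,N}(τ,s,ω), where α̃ ∈ {1,…,N−1} is the representative of α, and all series involved converge absolutely. -/

import Mathlib

open Complex

noncomputable section

/-- The `(m,n)`-term of the series defining `E^{(w)}_α(τ,s)`. -/
def ETerm (w : ℕ) (α : ℝ) (τ : ℂ) (s : ℂ) (p : ℤ × ℤ) : ℂ :=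
  ((τ.im : ℂ)) ^ s /
    (((p.1 : ℂ) * τ + (p.2 : ℂ) + (α : ℂ)) ^ w *
      ((Complex.normSq ((p.1 : ℂ) * τ + (p.2 : ℂ) + (α : ℂ)) : ℂ)) ^ s)

/-- The real-analytic Eisenstein series
`E^{(w)}_α(τ,s) = (−2πi)^{−w} π^{−s} Γ(s+w) Σ'_{(m,n)} y^s/((mτ+n+α)^w |mτ+n+α|^{2s})`,
where the term `(m,n) = (0,0)` is omitted when `α ∈ ℤ`. -/
def E (w : ℕ) (α : ℝ) (τ : ℂ) (s : ℂ) : ℂ :=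
  (-(2 * (Real.pi : ℂ) * Complex.I)) ^ (-(w : ℤ)) * (Real.pi : ℂ) ^ (-s) *
    Complex.Gamma (s + (w : ℂ)) *
    ∑' p : {q : ℤ × ℤ // (∃ z : ℤ, α = (z : ℝ)) → q ≠ 0}, ETerm w α τ s p.1

/-- The `(m,n)`-term of the series defining `E_{w,N}(τ,s,ω)`. -/
def EwNTerm (N : ℕ) (w : ℕ) (ω : DirichletCharacter ℂ N) (τ : ℂ) (s : ℂ) (p : ℤ × ℤ) : ℂ :=
  ω ((p.2 : ℤ) : ZMod N) /
    (((N : ℂ) * (p.1 : ℂ) * τ + (p.2 : ℂ)) ^ w *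
      ((Complex.normSq ((N : ℂ) * (p.1 : ℂ) * τ + (p.2 : ℂ)) : ℂ)) ^ s)

/-- The Eisenstein series `E_{w,N}(τ,s,ω) = Σ'_{(m,n)} ω(n)/((Nmτ+n)^w |Nmτ+n|^{2s})`. -/
def EwN (N : ℕ) (w : ℕ) (ω : DirichletCharacter ℂ N) (τ : ℂ) (s : ℂ) : ℂ :=
  ∑' p : {q : ℤ × ℤ // q ≠ 0}, EwNTerm N w ω τ s p.1

end

/-! Over the common denominator `N`, the lattice point `mτ + n + α̃/N` is `(Nmτ + (Nn + α̃))/N`,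
and the denominator `z ^ w * |z| ^ (2s)` is homogeneous of degree `w + 2s` under positive real
scaling, which pulls out `N ^ (w + 2s)`. As `α` runs over `(ℤ/Nℤ)ˣ` and `(m, n)` over `ℤ²`,
the pairs `(m, Nn + α̃)` run exactly once over the `(m, n')` with `n'` prime to `N`, the only
terms of `E_{w,N}` on which `ω(n') ≠ 0`. Absolute convergence comes from the convergence of
`Σ |mτ + n| ^ (-k)` for `k > 2`. -/

noncomputable def eisDenom (w : ℕ) (s z : ℂ) : ℂ := z ^ w * (normSq z : ℂ) ^ s

lemma ETerm_eq_div_eisDenom (w : ℕ) (α : ℝ) (τ s : ℂ) (p : ℤ × ℤ) :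
    ETerm w α τ s p = (τ.im : ℂ) ^ s / eisDenom w s (p.1 * τ + p.2 + α) := rfl

lemma EwNTerm_eq_div_eisDenom (N w : ℕ) (ω : DirichletCharacter ℂ N) (τ s : ℂ) (p : ℤ × ℤ) :
    EwNTerm N w ω τ s p = ω p.2 / eisDenom w s (N * p.1 * τ + p.2) := rfl

lemma eisDenom_div_ofReal (w : ℕ) (s z : ℂ) {c : ℝ} (hc : 0 < c) :
    eisDenom w s (z / c) = eisDenom w s z / (c : ℂ) ^ ((w : ℂ) + 2 * s) := by
  have hsq : ((c * c : ℝ) : ℂ) ^ s = (c : ℂ) ^ (2 * s) := by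
    rw [← sq, ← Real.rpow_two, ← cpow_mul_ofReal_nonneg hc.le, ofReal_ofNat]
  rw [eisDenom, eisDenom, div_pow, map_div₀, normSq_ofReal, ofReal_div,
    div_cpow_ofReal_nonneg (normSq_nonneg z) (mul_self_nonneg c), hsq,
    cpow_add _ _ (ofReal_ne_zero.2 hc.ne'), cpow_natCast]
  ring

lemma norm_eisDenom (w : ℕ) (s : ℂ) {z : ℂ} (hz : z ≠ 0) :
    ‖eisDenom w s z‖ = ‖z‖ ^ ((w : ℝ) + 2 * s.re) := by
  have hz' : 0 < ‖z‖ := norm_pos_iff.2 hz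
  rw [eisDenom, norm_mul, norm_pow, norm_cpow_eq_rpow_re_of_pos (normSq_pos.2 hz),
    normSq_eq_norm_sq, ← Real.rpow_natCast, ← Real.rpow_natCast, ← Real.rpow_mul hz'.le,
    ← Real.rpow_add hz']
  norm_num [mul_comm]

lemma lattice_ne_zero (τ : UpperHalfPlane) {p : ℤ × ℤ} (hp : p ≠ 0) : (p.1 : ℂ) * τ + p.2 ≠ 0 := by
  have h : ![(p.1 : ℝ), p.2] ≠ 0 := fun h => hp <| by
    have h0 := congrFun h 0
    have h1 := congrFun h 1
    simp only [Matrix.cons_val_zero, Matrix.cons_val_one, Pi.zero_apply, Int.cast_eq_zero] at h0 h1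
    exact Prod.ext h0 h1
  simpa using UpperHalfPlane.linear_ne_zero τ h

lemma lattice_natCast_mul_add_ne_zero (τ : UpperHalfPlane) {N a : ℕ} (ha : ¬ N ∣ a) (p : ℤ × ℤ) :
    (N : ℂ) * p.1 * τ + ((N * p.2 + a : ℤ) : ℂ) ≠ 0 := by
  have hp : ((N : ℤ) * p.1, (N : ℤ) * p.2 + a) ≠ 0 := fun h => ha <| by
    have h2 : (N : ℤ) * p.2 + a = 0 := congrArg Prod.snd h
    exact Int.natCast_dvd_natCast.1 ⟨-p.2, by linarith⟩
  simpa using lattice_ne_zero τ hp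

lemma summable_norm_lattice_rpow_neg (τ : UpperHalfPlane) {k : ℝ} (hk : 2 < k) :
    Summable fun p : ℤ × ℤ => ‖(p.1 : ℂ) * τ + p.2‖ ^ (-k) := by
  have h := ((EisensteinSeries.summable_one_div_norm_rpow hk).mul_left
    (EisensteinSeries.r τ ^ (-k))).of_nonneg_of_le (fun _ => by positivity)
    (EisensteinSeries.summand_bound τ (by linarith))
  simpa [Function.comp_def] using (finTwoArrowEquiv ℤ).symm.summable_iff.2 h

lemma ETerm_natCast_div (w : ℕ) {N : ℕ} (hN : N ≠ 0) (a : ℕ) (τ s : ℂ) (p : ℤ × ℤ) :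
    ETerm w ((a : ℝ) / N) τ s p = (τ.im : ℂ) ^ s * (N : ℂ) ^ ((w : ℂ) + 2 * s) /
      eisDenom w s (N * p.1 * τ + ((N * p.2 + a : ℤ) : ℂ)) := by
  have hscale : (p.1 : ℂ) * τ + p.2 + (((a : ℝ) / N : ℝ) : ℂ)
      = (N * p.1 * τ + ((N * p.2 + a : ℤ) : ℂ)) / ((N : ℝ) : ℂ) := by
    push_cast
    field_simp
    ring
  rw [ETerm_eq_div_eisDenom, hscale, eisDenom_div_ofReal _ _ _ (by positivity), ofReal_natCast,
    div_div_eq_mul_div]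

lemma mul_ETerm_eq_EwNTerm (w : ℕ) {N : ℕ} [NeZero N] (ω : DirichletCharacter ℂ N) (a : ZMod N)
    (τ s : ℂ) (p : ℤ × ℤ) :
    ω a * ETerm w ((a.val : ℝ) / N) τ s p
      = (τ.im : ℂ) ^ s * (N : ℂ) ^ ((w : ℂ) + 2 * s) * EwNTerm N w ω τ s (p.1, N * p.2 + a.val) := by
  have hres : (((N * p.2 + a.val : ℤ)) : ZMod N) = a := by simp
  rw [ETerm_natCast_div w (NeZero.ne N), EwNTerm_eq_div_eisDenom, hres]
  push_cast
  ring

lemma summable_norm_ETerm (τ : UpperHalfPlane) {w : ℕ} {s : ℂ} (hk : 2 < (w : ℝ) + 2 * s.re)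
    {N a : ℕ} (hN : N ≠ 0) (ha : ¬ N ∣ a) :
    Summable fun p : ℤ × ℤ => ‖ETerm w ((a : ℝ) / N) τ s p‖ := by
  have hinj : Function.Injective fun p : ℤ × ℤ => ((N * p.1 : ℤ), (N * p.2 + a : ℤ)) := by
    intro p q h
    simp only [Prod.mk.injEq, add_left_inj] at h
    have hN' : (N : ℤ) ≠ 0 := by exact_mod_cast hN
    exact Prod.ext (mul_left_cancel₀ hN' h.1) (mul_left_cancel₀ hN' h.2)
  refine (((summable_norm_lattice_rpow_neg τ hk).comp_injective hinj).mul_left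
    ‖(τ.im : ℂ) ^ s * (N : ℂ) ^ ((w : ℂ) + 2 * s)‖).congr fun p => ?_
  symm
  rw [ETerm_natCast_div w hN, norm_div, norm_eisDenom _ _ (lattice_natCast_mul_add_ne_zero τ ha p),
    div_eq_mul_inv, ← Real.rpow_neg (norm_nonneg _)]
  simp

lemma natCast_div_ne_intCast {N a : ℕ} (hN : N ≠ 0) (ha : ¬ N ∣ a) (z : ℤ) :
    (a : ℝ) / N ≠ z := by
  intro h
  rw [div_eq_iff (by positivity)] at h
  exact ha <| Int.natCast_dvd_natCast.1 ⟨z, by rw [mul_comm]; exact_mod_cast h⟩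

lemma E_eq_tsum (w : ℕ) {α : ℝ} (hα : ∀ z : ℤ, α ≠ z) (τ s : ℂ) :
    E w α τ s = (-(2 * (Real.pi : ℂ) * I)) ^ (-(w : ℤ)) * (Real.pi : ℂ) ^ (-s) * Gamma (s + w) *
      ∑' p : ℤ × ℤ, ETerm w α τ s p := by
  rw [E]
  congr 1
  exact tsum_subtype_eq_of_support_subset fun _ _ ⟨z, hz⟩ => absurd hz (hα z)

lemma EwNTerm_zero {N : ℕ} [Fact (1 < N)] (w : ℕ) (ω : DirichletCharacter ℂ N) (τ s : ℂ) :
    EwNTerm N w ω τ s 0 = 0 := by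
  simp [EwNTerm_eq_div_eisDenom, ω.map_nonunit not_isUnit_zero]

lemma isUnit_of_EwNTerm_ne_zero {N : ℕ} (w : ℕ) (ω : DirichletCharacter ℂ N) (τ s : ℂ)
    (p : ℤ × ℤ) (hp : EwNTerm N w ω τ s p ≠ 0) : IsUnit (p.2 : ZMod N) := by
  by_contra h
  exact hp (by rw [EwNTerm_eq_div_eisDenom, ω.map_nonunit h, zero_div])

lemma EwN_eq_tsum {N : ℕ} [Fact (1 < N)] (w : ℕ) (ω : DirichletCharacter ℂ N) (τ s : ℂ) :
    EwN N w ω τ s = ∑' p : ℤ × ℤ, EwNTerm N w ω τ s p :=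
  tsum_subtype_eq_of_support_subset fun _ hp h0 => hp (h0 ▸ EwNTerm_zero w ω τ s)

lemma norm_EwNTerm_le {N : ℕ} [Fact (1 < N)] (w : ℕ) (ω : DirichletCharacter ℂ N)
    (τ : UpperHalfPlane) (s : ℂ) (p : ℤ × ℤ) :
    ‖EwNTerm N w ω τ s p‖ ≤ ‖(((N : ℤ) * p.1 : ℤ) : ℂ) * τ + p.2‖ ^ (-((w : ℝ) + 2 * s.re)) := by
  rcases eq_or_ne p 0 with rfl | hp
  · rw [EwNTerm_zero, norm_zero]
    positivity
  have hL := lattice_ne_zero τ (p := ((N : ℤ) * p.1, p.2)) fun h => hp <| by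
    simp_all [Prod.ext_iff, NeZero.ne N]
  push_cast at hL ⊢
  rw [EwNTerm_eq_div_eisDenom, norm_div, norm_eisDenom _ _ hL, Real.rpow_neg (norm_nonneg _),
    ← one_div]
  gcongr
  exact ω.norm_le_one _

lemma summable_norm_EwNTerm {N : ℕ} [Fact (1 < N)] {w : ℕ} (ω : DirichletCharacter ℂ N)
    (τ : UpperHalfPlane) {s : ℂ} (hk : 2 < (w : ℝ) + 2 * s.re) :
    Summable fun p : ℤ × ℤ => ‖EwNTerm N w ω τ s p‖ := by
  have hinj : Function.Injective fun p : ℤ × ℤ => ((N : ℤ) * p.1, p.2) := by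
    intro p q h
    simp only [Prod.mk.injEq] at h
    exact Prod.ext (mul_left_cancel₀ (by simp [NeZero.ne N]) h.1) h.2
  exact ((summable_norm_lattice_rpow_neg τ hk).comp_injective hinj).of_nonneg_of_le
    (fun _ => norm_nonneg _) (norm_EwNTerm_le w ω τ s)

lemma tsum_eq_sum_units_tsum {E : Type*} [NormedAddCommGroup E] [CompleteSpace E] {N : ℕ}
    [NeZero N] {f : ℤ × ℤ → E} (hf : Summable f)
    (hunit : ∀ p, f p ≠ 0 → IsUnit (p.2 : ZMod N)) :
    ∑' p, f p = ∑ a : (ZMod N)ˣ, ∑' p : ℤ × ℤ, f (p.1, N * p.2 + (a : ZMod N).val) := by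
  set ι : (ZMod N)ˣ × (ℤ × ℤ) → ℤ × ℤ := fun x => (x.2.1, N * x.2.2 + (x.1 : ZMod N).val)
  have hres : ∀ x, ((ι x).2 : ZMod N) = x.1 := fun x => by simp [ι]
  have hinj : ι.Injective := by
    rintro ⟨a, m, n⟩ ⟨b, m', n'⟩ h
    obtain rfl : a = b := Units.ext <| by simpa [hres] using congrArg (fun q => (q.2 : ZMod N)) h
    simp only [ι, Prod.mk.injEq, add_left_inj] at h
    simp [h.1, mul_left_cancel₀ (Nat.cast_ne_zero.2 (NeZero.ne N)) h.2]
  have hsupp : Function.support f ⊆ Set.range ι := by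
    intro p hp
    obtain ⟨u, hu⟩ := hunit p hp
    refine ⟨(u, p.1, p.2 / N), Prod.ext rfl ?_⟩
    simp only [ι, hu, ZMod.val_intCast]
    exact Int.mul_ediv_add_emod p.2 N
  have hg : Summable fun x => f (ι x) := hf.comp_injective hinj
  rw [← hinj.tsum_eq hsupp, hg.tsum_prod' fun a => hg.comp_injective (Prod.mk_right_injective a),
    tsum_fintype]

/-- `Σ_{α∈(ℤ/Nℤ)ˣ} ω(α) E^{(w)}_{α̃/N}(τ,s) = (−2πi)^{−w} π^{−s} Γ(s+w) Im(τ)^s N^{w+2s} E_{w,N}(τ,s,ω)`,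
all series involved converging absolutely. -/
theorem sum_E_eq_EwN
    (N : ℕ) (hN : 2 ≤ N) [NeZero N] (w : ℕ) (ω : DirichletCharacter ℂ N)
    (τ : UpperHalfPlane) (s : ℂ) (hs : (w : ℝ) + 2 * s.re > 2) :
    (∀ α : (ZMod N)ˣ,
      Summable (fun p : {q : ℤ × ℤ //
          (∃ z : ℤ, (((α : ZMod N).val : ℝ) / N) = (z : ℝ)) → q ≠ 0} =>
        ‖ETerm w (((α : ZMod N).val : ℝ) / N) (τ : ℂ) s p.1‖)) ∧
    Summable (fun p : {q : ℤ × ℤ // q ≠ 0} => ‖EwNTerm N w ω (τ : ℂ) s p.1‖) ∧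
    ∑ α : (ZMod N)ˣ, ω α * E w (((α : ZMod N).val : ℝ) / N) (τ : ℂ) s
      = (-(2 * (Real.pi : ℂ) * Complex.I)) ^ (-(w : ℤ)) * (Real.pi : ℂ) ^ (-s) *
          Complex.Gamma (s + (w : ℂ)) * ((τ.im : ℝ) : ℂ) ^ s *
          (N : ℂ) ^ ((w : ℂ) + 2 * s) * EwN N w ω (τ : ℂ) s := by
  have : Fact (1 < N) := ⟨hN⟩
  have hunit : ∀ α : (ZMod N)ˣ, ¬ N ∣ (α : ZMod N).val := fun α h =>
    α.ne_zero <| by rwa [← ZMod.natCast_eq_zero_iff, ZMod.natCast_zmod_val] at h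
  have hEwN := summable_norm_EwNTerm ω τ hs
  refine ⟨fun α => (summable_norm_ETerm τ hs (NeZero.ne N) (hunit α)).subtype _,
    hEwN.subtype _, ?_⟩
  simp_rw [E_eq_tsum w (natCast_div_ne_intCast (NeZero.ne N) (hunit _)), mul_left_comm (ω _),
    ← tsum_mul_left, mul_ETerm_eq_EwNTerm, tsum_mul_left, ← Finset.mul_sum,
    ← tsum_eq_sum_units_tsum hEwN.of_norm (isUnit_of_EwNTerm_ne_zero w ω τ s), EwN_eq_tsum,
    UpperHalfPlane.coe_im]
  ring
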